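/- Assume ñ > 2. Let a > 0 and let u : [a, ∞) → ℝ be twice continuously differentiable with u(a) = 0, u'(a) = α > 0, u(r) > 0 for all r > a, and suppose u satisfies the Pucci differential inequalities at every r > a. Then u(r) → 0 as r → ∞. -/

import Mathlib

open Real Set

/-- `P⁺[u](r)`: the Pucci maximal operator `𝓜⁺_{λ,Λ}` evaluated on the Hessian of the
radial function `v(x) = u(|x|)`, expressed through `u'` and `u''`. -/
noncomputable def Pp (n : ℕ) (lam Lam : ℝ) (u' u'' : ℝ → ℝ) (r : ℝ) : ℝ :=
  Lam * max (u'' r) 0 + lam * min (u'' r) 0 +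
    ((n : ℝ) - 1) * (Lam * max (u' r / r) 0 + lam * min (u' r / r) 0)

/-- `P⁻[u](r)`: the Pucci minimal operator `𝓜⁻_{λ,Λ}` evaluated on the Hessian of the
radial function `v(x) = u(|x|)`. -/
noncomputable def Pm (n : ℕ) (lam Lam : ℝ) (u' u'' : ℝ → ℝ) (r : ℝ) : ℝ :=
  lam * max (u'' r) 0 + Lam * min (u'' r) 0 +
    ((n : ℝ) - 1) * (lam * max (u' r / r) 0 + Lam * min (u' r / r) 0)

/-- `u` satisfies the Pucci differential inequalities at `r`:
`−P⁺[u](r) ≤ |u(r)|^{p−1}u(r) ≤ −P⁻[u](r)`. -/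
def PucciIneq (n : ℕ) (lam Lam p : ℝ) (u u' u'' : ℝ → ℝ) (r : ℝ) : Prop :=
  -Pp n lam Lam u' u'' r ≤ |u r| ^ (p - 1) * u r ∧
    |u r| ^ (p - 1) * u r ≤ -Pm n lam Lam u' u'' r

/-!
For `r > a` the positivity of `u` turns the upper Pucci inequality into
`u ^ p ≤ Λ ((ñ - 1) max (-u'/r) 0 - u'')`.

At a critical point this forces `u'' < 0`, so once `u'` is nonpositive it stays so; and it must
become nonpositive, since otherwise `u` increases and `Λ u'' ≤ -u(a + 1) ^ p` drives `u'` below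
zero. From then on `u` decreases. If it stayed above some `ε > 0`, then with `c = ε ^ p / (Λ ñ)`
the function `r ^ (ñ - 1) (-u') - c r ^ ñ` would be nondecreasing, so `-u' ≥ c r - D`,
and `u` would eventually become negative.
-/

open Filter

section Calculus

variable {f f' : ℝ → ℝ} {b : ℝ}

theorem monotoneOn_Ici_of_hasDerivAt_nonneg (hf : ∀ x ∈ Ici b, HasDerivAt f (f' x) x)
    (hf' : ∀ x ∈ Ioi b, 0 ≤ f' x) : MonotoneOn f (Ici b) :=
  monotoneOn_of_hasDerivWithinAt_nonneg (convex_Ici b)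
    (fun x hx => (hf x hx).continuousAt.continuousWithinAt)
    (fun x hx => by
      rw [interior_Ici] at hx ⊢
      exact (hf x (mem_Ici_of_Ioi hx)).hasDerivWithinAt)
    (fun x hx => hf' x (by rwa [interior_Ici] at hx))

theorem antitoneOn_Ici_of_hasDerivAt_nonpos (hf : ∀ x ∈ Ici b, HasDerivAt f (f' x) x)
    (hf' : ∀ x ∈ Ioi b, f' x ≤ 0) : AntitoneOn f (Ici b) := by
  have h := monotoneOn_Ici_of_hasDerivAt_nonneg (fun x hx => (hf x hx).neg)
    (fun x hx => neg_nonneg.2 (hf' x hx))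
  exact fun x hx y hy hxy => neg_le_neg_iff.1 (h hx hy hxy)

theorem exists_neg_of_hasDerivAt_le_neg {c : ℝ} (hc : 0 < c)
    (hf : ∀ x ∈ Ici b, HasDerivAt f (f' x) x) (hf' : ∀ x ∈ Ioi b, f' x ≤ -c) :
    ∃ x ∈ Ici b, f x < 0 := by
  have hanti : AntitoneOn (fun x => f x + c * x) (Ici b) :=
    antitoneOn_Ici_of_hasDerivAt_nonpos (f' := fun x => f' x + c)
      (fun x hx => by
        have h := (hf x hx).add ((hasDerivAt_id' x).const_mul c)
        rwa [mul_one] at h)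
      (fun x hx => by linarith [hf' x hx])
  set x := b + (|f b| + 1) / c
  have hcx : c * x = c * b + (|f b| + 1) := by simp only [x]; field_simp
  have hbx : b ≤ x := le_add_of_nonneg_right (by positivity)
  refine ⟨x, hbx, ?_⟩
  have := hanti self_mem_Ici hbx hbx
  linarith [le_abs_self (f b)]

theorem nonpos_of_hasDerivAt_neg_of_eq_zero (hf : ∀ x ∈ Ici b, HasDerivAt f (f' x) x)
    (hb : f b ≤ 0) (hzero : ∀ x ∈ Ici b, f x = 0 → f' x < 0) : ∀ x ∈ Ici b, f x ≤ 0 := by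
  intro x hx
  refine image_le_of_deriv_right_lt_deriv_boundary' (B := 0) (B' := 0)
    (fun y hy => (hf y hy.1).continuousAt.continuousWithinAt)
    (fun y hy => (hf y hy.1).hasDerivWithinAt) hb continuousOn_const
    (fun y _ => hasDerivWithinAt_const _ _ _) (fun y hy => hzero y hy.1) ⟨hx, le_rfl⟩

end Calculus

theorem abs_rpow_sub_one_mul_self_of_pos {x : ℝ} (hx : 0 < x) (p : ℝ) :
    |x| ^ (p - 1) * x = x ^ p := by
  rw [abs_of_pos hx, rpow_sub_one hx.ne', div_mul_cancel₀ _ hx.ne']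

theorem le_Lam_mul_of_le_neg_Pm {n : ℕ} {lam Lam F r : ℝ} {u' u'' : ℝ → ℝ} (hn : 1 ≤ n)
    (hlam : 0 < lam) (hlL : lam ≤ Lam) (hF : 0 < F) (h : F ≤ -Pm n lam Lam u' u'' r) :
    F ≤ Lam * (Lam / lam * (n - 1) * max (-(u' r / r)) 0 - u'' r) := by
  have hn1 : (0 : ℝ) ≤ n - 1 := sub_nonneg.2 (by exact_mod_cast hn)
  have hratio : 1 ≤ Lam / lam := (one_le_div hlam).2 hlL
  unfold Pm at h
  generalize u'' r = x at h ⊢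
  generalize u' r / r = y at h ⊢
  have htan : F ≤ -(lam * max x 0 + Lam * min x 0) + (n - 1) * (Lam * max (-y) 0) := by
    rcases le_total 0 y with hy | hy
    · rw [max_eq_left hy, min_eq_right hy] at h
      rw [max_eq_right (neg_nonpos.2 hy)]
      linarith [mul_nonneg hn1 (mul_nonneg hlam.le hy)]
    · rw [max_eq_right hy, min_eq_left hy] at h
      rw [max_eq_left (neg_nonneg.2 hy)]
      linarith
  have hT : 0 ≤ (n - 1) * (Lam * max (-y) 0) :=
    mul_nonneg hn1 (mul_nonneg (hlam.le.trans hlL) (le_max_right _ _))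
  rw [show Lam * (Lam / lam * (n - 1) * max (-y) 0 - x) =
    Lam / lam * ((n - 1) * (Lam * max (-y) 0)) - Lam * x by ring]
  generalize (n - 1) * (Lam * max (-y) 0) = T at htan hT ⊢
  rcases le_total 0 x with hx | hx
  · rw [max_eq_left hx, min_eq_right hx] at htan
    -- `F > 0` forces `T > λ x`, and the factor `Λ/λ ≥ 1` only enlarges `T - λ x`
    have h1 := mul_le_mul_of_nonneg_right hratio (by linarith : 0 ≤ T - lam * x)
    have h2 : Lam / lam * (lam * x) = Lam * x := by field_simp
    linarith
  · rw [max_eq_right hx, min_eq_left hx] at htan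
    linarith [mul_le_mul_of_nonneg_right hratio hT]

theorem monotoneOn_rpow_mul_sub {v v' : ℝ → ℝ} {b N c : ℝ} (hb : 0 < b)
    (hv : ∀ r ∈ Ici b, HasDerivAt v (v' r) r)
    (hbound : ∀ r ∈ Ioi b, N * c ≤ (N - 1) * (v r / r) + v' r) :
    MonotoneOn (fun r => r ^ (N - 1) * v r - c * r ^ N) (Ici b) := by
  refine monotoneOn_Ici_of_hasDerivAt_nonneg
    (f' := fun r => r ^ (N - 1) * ((N - 1) * (v r / r) + v' r - N * c)) (fun r hr => ?_)
    fun r hr => mul_nonneg (rpow_nonneg (hb.trans hr).le _) (sub_nonneg.2 (hbound r hr))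
  have hr0 : r ≠ 0 := (hb.trans_le hr).ne'
  have h := ((hasDerivAt_rpow_const (p := N - 1) (Or.inl hr0)).mul (hv r hr)).sub
    ((hasDerivAt_rpow_const (p := N) (Or.inl hr0)).const_mul c)
  refine h.congr_deriv ?_
  rw [rpow_sub_one hr0 (N - 1)]
  field_simp

theorem exists_le_of_monotoneOn_rpow_mul_sub {v : ℝ → ℝ} {b N c : ℝ} (hb : 0 < b) (hN : 1 ≤ N)
    (hG : MonotoneOn (fun r => r ^ (N - 1) * v r - c * r ^ N) (Ici b)) :
    ∃ D, ∀ r ∈ Ici b, c * r - D ≤ v r := by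
  set G := fun r => r ^ (N - 1) * v r - c * r ^ N
  refine ⟨|G b| / b ^ (N - 1), fun r hr => ?_⟩
  have hr0 : 0 < r := hb.trans_le hr
  have hpow : b ^ (N - 1) ≤ r ^ (N - 1) := rpow_le_rpow hb.le hr (by linarith)
  have hrN : r ^ N = r ^ (N - 1) * r := by rw [← rpow_add_one hr0.ne', sub_add_cancel]
  have hGr : G b ≤ r ^ (N - 1) * v r - c * (r ^ (N - 1) * r) := hrN ▸ hG self_mem_Ici hr hr
  have key : c * r - v r ≤ |G b| / r ^ (N - 1) := by
    rw [le_div_iff₀ (rpow_pos_of_pos hr0 _)]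
    linarith [neg_abs_le (G b)]
  have hD : |G b| / r ^ (N - 1) ≤ |G b| / b ^ (N - 1) :=
    div_le_div_of_nonneg_left (abs_nonneg _) (rpow_pos_of_pos hb _) hpow
  linarith

section RadialInequality

variable {u u' u'' : ℝ → ℝ} {a Lam N p : ℝ}

theorem exists_gt_deriv_nonpos (ha : 0 ≤ a) (hLam : 0 < Lam) (hp : 0 ≤ p)
    (hu : ∀ r ∈ Ici a, HasDerivAt u (u' r) r) (hu' : ∀ r ∈ Ici a, HasDerivAt u' (u'' r) r)
    (hpos : ∀ r ∈ Ioi a, 0 < u r)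
    (hineq : ∀ r ∈ Ioi a, u r ^ p ≤ Lam * ((N - 1) * max (-(u' r / r)) 0 - u'' r)) :
    ∃ r ∈ Ioi a, u' r ≤ 0 := by
  by_contra! hu'pos
  have hab : a < a + 1 := lt_add_one a
  have hmono : MonotoneOn u (Ici (a + 1)) :=
    monotoneOn_Ici_of_hasDerivAt_nonneg (fun r hr => hu r (hab.le.trans hr))
      fun r hr => (hu'pos r (hab.trans hr)).le
  -- `u ≥ u (a + 1)` beyond `a + 1` keeps `Λ u''` below `-u (a + 1) ^ p`
  have hK : 0 < u (a + 1) ^ p / Lam := div_pos (rpow_pos_of_pos (hpos _ hab) p) hLam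
  obtain ⟨r, hr, hu'r⟩ := exists_neg_of_hasDerivAt_le_neg hK
    (fun r hr => hu' r (hab.le.trans hr)) fun r hr => by
      have hra : a < r := hab.trans hr
      have h := hineq r hra
      rw [max_eq_right (neg_nonpos.2 (div_pos (hu'pos r hra) (ha.trans_lt hra)).le),
        mul_zero, zero_sub] at h
      have hur : u (a + 1) ^ p ≤ u r ^ p := rpow_le_rpow (hpos _ hab).le
        (hmono self_mem_Ici (mem_Ici_of_Ioi hr) (mem_Ici_of_Ioi hr)) hp
      have := (div_le_iff₀ hLam).2 (show u (a + 1) ^ p ≤ -u'' r * Lam by linarith)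
      linarith
  exact hu'r.not_gt (hu'pos r (hab.trans_le hr))

theorem deriv_nonpos_Ici_of_deriv_nonpos (hLam : 0 < Lam)
    (hu' : ∀ r ∈ Ici a, HasDerivAt u' (u'' r) r) (hpos : ∀ r ∈ Ioi a, 0 < u r)
    (hineq : ∀ r ∈ Ioi a, u r ^ p ≤ Lam * ((N - 1) * max (-(u' r / r)) 0 - u'' r))
    {r₁ : ℝ} (hr₁ : a < r₁) (hu'r₁ : u' r₁ ≤ 0) : ∀ r ∈ Ici r₁, u' r ≤ 0 :=
  nonpos_of_hasDerivAt_neg_of_eq_zero (fun r hr => hu' r (hr₁.le.trans hr)) hu'r₁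
    fun r hr hr0 => by
      have hra : a < r := hr₁.trans_le hr
      have h := hineq r hra
      rw [hr0, zero_div, neg_zero, max_self, mul_zero, zero_sub] at h
      exact neg_pos.1 (pos_of_mul_pos_right ((rpow_pos_of_pos (hpos r hra) p).trans_le h) hLam.le)

theorem exists_lt_of_deriv_nonpos (ha : 0 ≤ a) (hLam : 0 < Lam) (hN : 1 ≤ N) (hp : 0 ≤ p)
    (hu : ∀ r ∈ Ici a, HasDerivAt u (u' r) r) (hu' : ∀ r ∈ Ici a, HasDerivAt u' (u'' r) r)
    (hpos : ∀ r ∈ Ioi a, 0 < u r)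
    (hineq : ∀ r ∈ Ioi a, u r ^ p ≤ Lam * ((N - 1) * max (-(u' r / r)) 0 - u'' r))
    {r₁ : ℝ} (hr₁ : a < r₁) (hu'r : ∀ r ∈ Ici r₁, u' r ≤ 0) {ε : ℝ} (hε : 0 < ε) :
    ∃ r ∈ Ici r₁, u r < ε := by
  by_contra! hεu
  have hr₁0 : 0 < r₁ := ha.trans_lt hr₁
  set c := ε ^ p / (Lam * N)
  have hc : 0 < c := div_pos (rpow_pos_of_pos hε p) (mul_pos hLam (one_pos.trans_le hN))
  -- `u ≥ ε` turns the inequality into `(r ^ (N - 1) (-u'))' ≥ N c r ^ (N - 1)`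
  have hG : MonotoneOn (fun r => r ^ (N - 1) * -u' r - c * r ^ N) (Ici r₁) :=
    monotoneOn_rpow_mul_sub hr₁0 (fun r hr => (hu' r (hr₁.le.trans hr)).neg) fun r hr => by
      have h := hineq r (hr₁.trans hr)
      rw [max_eq_left (neg_nonneg.2
        (div_nonpos_of_nonpos_of_nonneg (hu'r r (mem_Ici_of_Ioi hr)) (hr₁0.trans hr).le))] at h
      have hεu' : ε ^ p ≤ u r ^ p := rpow_le_rpow hε.le (hεu r (mem_Ici_of_Ioi hr)) hp
      have hNc : N * c = ε ^ p / Lam := by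
        simp only [c]
        field_simp
      rw [hNc, div_le_iff₀ hLam, neg_div]
      linarith
  obtain ⟨D, hD⟩ := exists_le_of_monotoneOn_rpow_mul_sub hr₁0 hN hG
  have hr₂ : r₁ ≤ max r₁ ((D + 1) / c) := le_max_left _ _
  obtain ⟨r, hr, hur⟩ := exists_neg_of_hasDerivAt_le_neg one_pos
    (fun r hr => hu r (hr₁.le.trans (hr₂.trans hr))) fun r hr => by
      have hDr := hD r (hr₂.trans hr.le)
      have hrc : (D + 1) / c ≤ r := (le_max_right _ _).trans hr.le
      rw [div_le_iff₀ hc] at hrc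
      linarith
  exact hur.not_gt (hpos r (hr₁.trans_le (hr₂.trans hr)))

end RadialInequality

theorem tendsto_zero_of_global_positive_arc_general
    (n : ℕ) (hn : 2 ≤ n) (lam Lam p ntil : ℝ) (hlam : 0 < lam) (hlL : lam ≤ Lam) (hp : 1 < p)
    (hnt : ntil = Lam / lam * ((n : ℝ) - 1) + 1)
    (a : ℝ) (ha : 0 < a)
    (u u' u'' : ℝ → ℝ)
    (hu : ∀ r : ℝ, a ≤ r → HasDerivAt u (u' r) r)
    (hu' : ∀ r : ℝ, a ≤ r → HasDerivAt u' (u'' r) r)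
    (hpos : ∀ r : ℝ, a < r → 0 < u r)
    (hPucci : ∀ r : ℝ, a < r → PucciIneq n lam Lam p u u' u'' r) :
    Filter.Tendsto u Filter.atTop (nhds 0) := by
  have hn1 : 1 ≤ n := one_le_two.trans hn
  have hLam : 0 < Lam := hlam.trans_le hlL
  have hN : 1 ≤ ntil := hnt ▸ le_add_of_nonneg_left
    (mul_nonneg (div_nonneg hLam.le hlam.le) (sub_nonneg.2 (by exact_mod_cast hn1)))
  have hineq : ∀ r ∈ Ioi a, u r ^ p ≤ Lam * ((ntil - 1) * max (-(u' r / r)) 0 - u'' r) := by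
    intro r hr
    have h := (hPucci r hr).2
    rw [abs_rpow_sub_one_mul_self_of_pos (hpos r hr)] at h
    rw [hnt, add_sub_cancel_right]
    exact le_Lam_mul_of_le_neg_Pm hn1 hlam hlL (rpow_pos_of_pos (hpos r hr) p) h
  obtain ⟨r₁, hr₁, hu'r₁⟩ := exists_gt_deriv_nonpos ha.le hLam (by linarith) hu hu' hpos hineq
  have hu'nonpos := deriv_nonpos_Ici_of_deriv_nonpos hLam hu' hpos hineq hr₁ hu'r₁
  have hanti : AntitoneOn u (Ici r₁) := antitoneOn_Ici_of_hasDerivAt_nonpos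
    (fun r hr => hu r (hr₁.le.trans hr)) fun r hr => hu'nonpos r (mem_Ici_of_Ioi hr)
  refine tendsto_order.2 ⟨fun ε hε => ?_, fun ε hε => ?_⟩
  · filter_upwards [eventually_gt_atTop a] with r hr using hε.trans (hpos r hr)
  · obtain ⟨s, hs, hus⟩ := exists_lt_of_deriv_nonpos ha.le hLam hN (by linarith) hu hu' hpos
      hineq hr₁ hu'nonpos hε
    filter_upwards [eventually_ge_atTop s] with r hr using
      (hanti hs (hs.trans hr) hr).trans_lt hus

/-- Corollary 2.3 (paper): if the maximal positive radial arc is global (`ρ = ∞`),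
then `u(r) → 0` as `r → ∞`. -/
theorem tendsto_zero_of_global_positive_arc
    (n : ℕ) (hn : 2 ≤ n) (lam Lam p ntil : ℝ) (hlam : 0 < lam) (hlL : lam ≤ Lam) (hp : 1 < p)
    (hnt : ntil = Lam / lam * ((n : ℝ) - 1) + 1) (hnt2 : 2 < ntil)
    (a α : ℝ) (ha : 0 < a) (hα : 0 < α)
    (u u' u'' : ℝ → ℝ)
    (hu : ∀ r : ℝ, a ≤ r → HasDerivAt u (u' r) r)
    (hu' : ∀ r : ℝ, a ≤ r → HasDerivAt u' (u'' r) r)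
    (hu'' : ContinuousOn u'' (Ici a))
    (hua : u a = 0) (hu'a : u' a = α)
    (hpos : ∀ r : ℝ, a < r → 0 < u r)
    (hPucci : ∀ r : ℝ, a < r → PucciIneq n lam Lam p u u' u'' r) :
    Filter.Tendsto u Filter.atTop (nhds 0) :=
  tendsto_zero_of_global_positive_arc_general n hn lam Lam p ntil hlam hlL hp hnt a ha u u' u'' hu
    hu' hpos hPucci
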